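/- arXiv:1803.03694 — 2 statements merged into one kernel-verified Lean document; each statement's English description precedes it below -/
import Mathlib

section
/- Inner approximation of the region of safety by the slack function (claim following problem (7)): Let f : ℝⁿ × ℝᵐ → ℝⁿ, let X ⊆ ℝⁿ, X_U ⊆ ℝⁿ, D ⊆ ℝᵐ, let B : ℝⁿ → ℝ be differentiable and Ω : ℝⁿ → ℝ be any function such that (i) B(x) > 0 for all x ∈ X_U, (ii) the derivative of B at x applied to f(x,d) is nonpositive for all (x,d) ∈ X × D, and (iii) Ω(x) ≥ B(x) + 1 and Ω(x) ≥ 0 for all x ∈ X. Then the zero sublevel set of Ω − 1 within X, namely {x ∈ X : Ω(x) ≤ 1}, is a region of safety: for every T ≥ 0, every differentiable trajectory x : ℝ → ℝⁿ with disturbance d : ℝ → ℝᵐ satisfying d(t) ∈ D, x'(t) = f(x(t), d(t)), x(0) ∈ {x ∈ X : Ω(x) ≤ 1}, and x(t) ∈ X for all t ∈ [0,T], one has x(t) ∉ X_U for all t ∈ [0,T]. -/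
/-! By (ii), `B` is nonincreasing along every trajectory that stays in `X`, while (iii) gives
`B (x 0) ≤ Ω (x 0) - 1 ≤ 0` at a start in the sublevel set; so `B` stays nonpositive and the
trajectory cannot reach `X_U`, where `B > 0` by (i). -/

open Set

theorem antitoneOn_comp_of_fderiv_apply_nonpos {E : Type*} [NormedAddCommGroup E]
    [NormedSpace ℝ E] {B : E → ℝ} {γ γ' : ℝ → E} {D : Set ℝ} (hD : Convex ℝ D)
    (hγ : ∀ t ∈ D, HasDerivAt γ (γ' t) t) (hB : ∀ t ∈ D, DifferentiableAt ℝ B (γ t))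
    (hle : ∀ t ∈ interior D, fderiv ℝ B (γ t) (γ' t) ≤ 0) :
    AntitoneOn (B ∘ γ) D := by
  have hderiv : ∀ t ∈ D, HasDerivAt (B ∘ γ) (fderiv ℝ B (γ t) (γ' t)) t := fun t ht =>
    (hB t ht).hasFDerivAt.comp_hasDerivAt t (hγ t ht)
  exact antitoneOn_of_hasDerivWithinAt_nonpos hD
    (fun t ht => (hderiv t ht).continuousAt.continuousWithinAt)
    (fun t ht => (hderiv t (interior_subset ht)).hasDerivWithinAt) hle

theorem slack_sublevel_is_ROS_general {n m : ℕ}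
    (f : (Fin n → ℝ) → (Fin m → ℝ) → (Fin n → ℝ))
    (X XU : Set (Fin n → ℝ)) (D : Set (Fin m → ℝ))
    (B : (Fin n → ℝ) → ℝ) (hB : Differentiable ℝ B)
    (Ω : (Fin n → ℝ) → ℝ)
    (hBU : ∀ x ∈ XU, B x > 0)
    (hBdec : ∀ x ∈ X, ∀ δ ∈ D, fderiv ℝ B x (f x δ) ≤ 0)
    (hΩB : ∀ x ∈ X, Ω x ≥ B x + 1)
    (T : ℝ)
    (x : ℝ → (Fin n → ℝ)) (d : ℝ → (Fin m → ℝ))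
    (hd : ∀ t ∈ Set.Icc (0 : ℝ) T, d t ∈ D)
    (hode : ∀ t ∈ Set.Icc (0 : ℝ) T, HasDerivAt x (f (x t) (d t)) t)
    (hx0 : x 0 ∈ {y ∈ X | Ω y ≤ 1})
    (hxX : ∀ t ∈ Set.Icc (0 : ℝ) T, x t ∈ X) :
    ∀ t ∈ Set.Icc (0 : ℝ) T, x t ∉ XU := by
  intro t ht hxU
  have hanti : AntitoneOn (B ∘ x) (Icc 0 T) :=
    antitoneOn_comp_of_fderiv_apply_nonpos (convex_Icc 0 T) hode (fun _ _ => hB _)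
      fun s hs => hBdec _ (hxX s (interior_subset hs)) _ (hd s (interior_subset hs))
  have hdecr : B (x t) ≤ B (x 0) := hanti ⟨le_rfl, ht.1.trans ht.2⟩ ht ht.1
  have hstart : B (x 0) ≤ 0 := by linarith [hΩB (x 0) hx0.1, hx0.2]
  linarith [hBU (x t) hxU]

/-- Inner approximation of the region of safety by the slack function. -/
theorem slack_sublevel_is_ROS {n m : ℕ}
    (f : (Fin n → ℝ) → (Fin m → ℝ) → (Fin n → ℝ))
    (X XU : Set (Fin n → ℝ)) (D : Set (Fin m → ℝ))
    (B : (Fin n → ℝ) → ℝ) (hB : Differentiable ℝ B)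
    (Ω : (Fin n → ℝ) → ℝ)
    (hBU : ∀ x ∈ XU, B x > 0)
    (hBdec : ∀ x ∈ X, ∀ δ ∈ D, fderiv ℝ B x (f x δ) ≤ 0)
    (hΩB : ∀ x ∈ X, Ω x ≥ B x + 1)
    (hΩpos : ∀ x ∈ X, Ω x ≥ 0)
    (T : ℝ) (hT : 0 ≤ T)
    (x : ℝ → (Fin n → ℝ)) (d : ℝ → (Fin m → ℝ))
    (hd : ∀ t ∈ Set.Icc (0 : ℝ) T, d t ∈ D)
    (hode : ∀ t ∈ Set.Icc (0 : ℝ) T, HasDerivAt x (f (x t) (d t)) t)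
    (hx0 : x 0 ∈ {y ∈ X | Ω y ≤ 1})
    (hxX : ∀ t ∈ Set.Icc (0 : ℝ) T, x t ∈ X) :
    ∀ t ∈ Set.Icc (0 : ℝ) T, x t ∉ XU :=
  slack_sublevel_is_ROS_general f X XU D B hB Ω hBU hBdec hΩB T x d hd hode hx0 hxX
end

section
/- Safe switching principle (Proposition 1): Let f_i, f_j : ℝⁿ × ℝᵐ → ℝⁿ be the vector fields of two modes, let X ⊆ ℝⁿ, X_U ⊆ ℝⁿ, D ⊆ ℝᵐ, and let B_j : ℝⁿ → ℝ be differentiable with (i) B_j(x) > 0 for all x ∈ X_U and (ii) the derivative of B_j at x applied to f_j(x,d) nonpositive for all (x,d) ∈ X × D, so that S_j = {x ∈ X : B_j(x) ≤ 0} is the region of safety of mode j. Let t_s ≥ 0 be a switching time, T ≥ t_s, and x : ℝ → ℝⁿ a differentiable curve with disturbance d : ℝ → ℝᵐ, d(t) ∈ D, such that x'(t) = f_i(x(t), d(t)) for t ∈ [0, t_s], x'(t) = f_j(x(t), d(t)) for t ∈ [t_s, T], and x(t) ∈ X for all t ∈ [0,T]. If B_j(x(t_s)) ≤ 0, then x(t)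 ∉ X_U for all t ∈ [t_s, T]; i.e., switching from mode i to mode j at t_s is safe. -/
/-! Along the mode-`j` dynamics the chain rule makes `Bⱼ ∘ x` nonincreasing on `[tₛ, T]`, so it
stays `≤ Bⱼ (x tₛ) ≤ 0` there, whereas `Bⱼ > 0` on the unsafe set. -/

open Set

section Barrier

variable {E Δ : Type*} [NormedAddCommGroup E] [NormedSpace ℝ E]

theorem antitoneOn_comp_of_fderiv_apply_nonpos_s6 {B : E → ℝ} {x v : ℝ → E} {a b : ℝ}
    (hB : ∀ t ∈ Icc a b, DifferentiableAt ℝ B (x t)) (hx : ∀ t ∈ Icc a b, HasDerivAt x (v t) t)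
    (hv : ∀ t ∈ Icc a b, fderiv ℝ B (x t) (v t) ≤ 0) :
    AntitoneOn (B ∘ x) (Icc a b) := by
  have hderiv : ∀ t ∈ Icc a b, HasDerivAt (B ∘ x) (fderiv ℝ B (x t) (v t)) t := fun t ht =>
    (hB t ht).hasFDerivAt.comp_hasDerivAt t (hx t ht)
  exact antitoneOn_of_hasDerivWithinAt_nonpos (convex_Icc a b)
    (fun t ht => (hderiv t ht).continuousAt.continuousWithinAt)
    (fun t ht => (hderiv t (interior_subset ht)).hasDerivWithinAt)
    (fun t ht => hv t (interior_subset ht))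

theorem notMem_of_barrier {f : E → Δ → E} {X XU : Set E} {D : Set Δ} {B : E → ℝ}
    (hB : Differentiable ℝ B) (hBU : ∀ y ∈ XU, 0 < B y)
    (hBdec : ∀ y ∈ X, ∀ δ ∈ D, fderiv ℝ B y (f y δ) ≤ 0)
    {x : ℝ → E} {d : ℝ → Δ} {a b : ℝ} (hx : ∀ t ∈ Icc a b, HasDerivAt x (f (x t) (d t)) t)
    (hxX : ∀ t ∈ Icc a b, x t ∈ X) (hd : ∀ t ∈ Icc a b, d t ∈ D) (ha : B (x a) ≤ 0) :
    ∀ t ∈ Icc a b, x t ∉ XU := by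
  have hanti : AntitoneOn (B ∘ x) (Icc a b) :=
    antitoneOn_comp_of_fderiv_apply_nonpos_s6 (fun t _ => hB (x t)) hx
      fun t ht => hBdec _ (hxX t ht) _ (hd t ht)
  intro t ht hunsafe
  have hle : B (x t) ≤ B (x a) := hanti (left_mem_Icc.2 (ht.1.trans ht.2)) ht ht.1
  exact (hBU _ hunsafe).not_ge (hle.trans ha)

end Barrier

theorem safe_switching_principle_general {n m : ℕ}
    (fj : (Fin n → ℝ) → (Fin m → ℝ) → (Fin n → ℝ))
    (X XU : Set (Fin n → ℝ)) (D : Set (Fin m → ℝ))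
    (Bj : (Fin n → ℝ) → ℝ) (hBj : Differentiable ℝ Bj)
    (hBU : ∀ x ∈ XU, Bj x > 0)
    (hBdec : ∀ x ∈ X, ∀ δ ∈ D, fderiv ℝ Bj x (fj x δ) ≤ 0)
    (ts T : ℝ) (hts : 0 ≤ ts)
    (x : ℝ → (Fin n → ℝ)) (d : ℝ → (Fin m → ℝ))
    (hd : ∀ t ∈ Set.Icc (0 : ℝ) T, d t ∈ D)
    (hodej : ∀ t ∈ Set.Icc ts T, HasDerivAt x (fj (x t) (d t)) t)
    (hxX : ∀ t ∈ Set.Icc (0 : ℝ) T, x t ∈ X)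
    (hswitch : Bj (x ts) ≤ 0) :
    ∀ t ∈ Set.Icc ts T, x t ∉ XU := by
  have hsub : Icc ts T ⊆ Icc 0 T := Icc_subset_Icc hts le_rfl
  exact notMem_of_barrier hBj hBU hBdec hodej (fun t ht => hxX t (hsub ht))
    (fun t ht => hd t (hsub ht)) hswitch

/-- Safe switching principle (Proposition 1). -/
theorem safe_switching_principle {n m : ℕ}
    (fi fj : (Fin n → ℝ) → (Fin m → ℝ) → (Fin n → ℝ))
    (X XU : Set (Fin n → ℝ)) (D : Set (Fin m → ℝ))
    (Bj : (Fin n → ℝ) → ℝ) (hBj : Differentiable ℝ Bj)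
    (hBU : ∀ x ∈ XU, Bj x > 0)
    (hBdec : ∀ x ∈ X, ∀ δ ∈ D, fderiv ℝ Bj x (fj x δ) ≤ 0)
    (ts T : ℝ) (hts : 0 ≤ ts) (hT : ts ≤ T)
    (x : ℝ → (Fin n → ℝ)) (d : ℝ → (Fin m → ℝ))
    (hd : ∀ t ∈ Set.Icc (0 : ℝ) T, d t ∈ D)
    (hodei : ∀ t ∈ Set.Icc (0 : ℝ) ts, HasDerivAt x (fi (x t) (d t)) t)
    (hodej : ∀ t ∈ Set.Icc ts T, HasDerivAt x (fj (x t) (d t)) t)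
    (hxX : ∀ t ∈ Set.Icc (0 : ℝ) T, x t ∈ X)
    (hswitch : Bj (x ts) ≤ 0) :
    ∀ t ∈ Set.Icc ts T, x t ∉ XU :=
  safe_switching_principle_general fj X XU D Bj hBj hBU hBdec ts T hts x d hd hodej hxX hswitch
end
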